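/- A matrix-valued Laurent series S ∈ M_N(ℂ((z))) preserves the residue symplectic form, i.e. Ω(S·f, S·h) = Ω(f, h) for all f, h ∈ 𝓗, if and only if S*(−z)·S(z) = I, equivalently (since a matrix over the field ℂ((z)) with a one-sided inverse is invertible) S(z)·S*(−z) = I. This is the characterization of the loop group elements acting on Givental's symplectic space. -/

import Mathlib

noncomputable section

/-- The substitution `z ↦ −z` on a Laurent series. -/
def LaurentSeries.negZ (s : LaurentSeries ℂ) : LaurentSeries ℂ :=
  ⟨fun n => (-1 : ℂ) ^ n * s.coeff n,
    s.isPWO_support'.mono (by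
      intro n hn
      simp only [Function.mem_support, ne_eq] at hn ⊢
      intro hc
      exact hn (by rw [hc, mul_zero]))⟩

/-- The residue symplectic form
`Ω(f, h) = ∑_{i+j=−1} (−1)^j fᵢᵀ G hⱼ` on `𝓗 = (ℂ((z)))^N`. -/
def OmegaForm (N : ℕ) (G : Matrix (Fin N) (Fin N) ℂ)
    (f h : Fin N → LaurentSeries ℂ) : ℂ :=
  ∑ᶠ i : ℤ, (-1 : ℂ) ^ (-1 - i) *
    ∑ a : Fin N, ∑ b : Fin N, (f a).coeff i * G a b * (h b).coeff (-1 - i)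

/-- A matrix-valued Laurent series acting on `𝓗` by multiplication. -/
def matAct (N : ℕ) (S : Matrix (Fin N) (Fin N) (LaurentSeries ℂ))
    (f : Fin N → LaurentSeries ℂ) : Fin N → LaurentSeries ℂ :=
  fun a => ∑ b : Fin N, S a b * f b

/-- The adjoint transpose `S*(z) = G⁻¹ S(z)ᵀ G` with respect to the pairing `G`. -/
def adjT (N : ℕ) (G : Matrix (Fin N) (Fin N) ℂ)
    (S : Matrix (Fin N) (Fin N) (LaurentSeries ℂ)) :
    Matrix (Fin N) (Fin N) (LaurentSeries ℂ) :=
  (G⁻¹).map (fun c => HahnSeries.C c) * S.transpose * G.map (fun c => HahnSeries.C c)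

/-!
Write `h(−z)` for the image of `h` under the ring automorphism `z ↦ −z` of `ℂ((z))`. The form
`Ω(f, h)` is the residue of `fᵀ G h(−z)`, and a matrix `M` is determined by the pairing
`(f, h) ↦ res (fᵀ M h(−z))`: pairing unit vectors against monomials reads off its coefficients.
Moving `S` across the pairing gives `Ω(Sf, Sh) = res (fᵀ (Sᵀ G S(−z)) h(−z))`, so `S` preserves `Ω`
iff `Sᵀ G S(−z) = G`. Applying `z ↦ −z` and multiplying by `G⁻¹` turns this into
`S*(−z) S = 1`; over the commutative ring `ℂ((z))` a one-sided inverse of a square matrix is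
two-sided.
-/

open scoped Matrix

namespace HahnSeries

variable {Γ R : Type*} [AddCommGroup Γ] [PartialOrder Γ] [IsOrderedAddMonoid Γ]
  [NonUnitalNonAssocSemiring R]

theorem support_coeff_mul_coeff_sub_subset (x y : HahnSeries Γ R) (n : Γ) :
    (Function.support fun i => x.coeff i * y.coeff (n - i)) ⊆
      Prod.fst '' (Finset.antidiagonal x.isPWO_support y.isPWO_support n : Set (Γ × Γ)) := by
  intro i hi
  refine ⟨(i, n - i), ?_, rfl⟩
  rw [Finset.mem_coe, Finset.mem_antidiagonal]
  exact ⟨left_ne_zero_of_mul hi, right_ne_zero_of_mul hi, add_sub_cancel _ _⟩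

theorem hasFiniteSupport_coeff_mul_coeff_sub (x y : HahnSeries Γ R) (n : Γ) :
    Function.HasFiniteSupport fun i => x.coeff i * y.coeff (n - i) :=
  ((Finset.finite_toSet _).image _).subset (support_coeff_mul_coeff_sub_subset x y n)

theorem coeff_mul_eq_finsum (x y : HahnSeries Γ R) (n : Γ) :
    (x * y).coeff n = ∑ᶠ i, x.coeff i * y.coeff (n - i) := by
  classical
  rw [finsum_eq_finsetSum_of_support_subset (s := (Finset.antidiagonal _ _ n).image Prod.fst) _
      (by simpa only [Finset.coe_image] using support_coeff_mul_coeff_sub_subset x y n),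
    Finset.sum_image, coeff_mul]
  · refine Finset.sum_congr rfl fun ij hij => ?_
    rw [← (Finset.mem_antidiagonal.mp hij).2.2, add_sub_cancel_left]
  · intro ij hij kl hkl h
    rw [Finset.mem_coe, Finset.mem_antidiagonal] at hij hkl
    exact Prod.ext h (add_left_cancel (a := ij.1) (by rw [hij.2.2, h, hkl.2.2]))

end HahnSeries

namespace LaurentSeries

@[simp] theorem coeff_negZ (s : LaurentSeries ℂ) (n : ℤ) :
    s.negZ.coeff n = (-1) ^ n * s.coeff n := rfl

theorem negZ_involutive : Function.Involutive negZ := fun s => by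
  ext n
  rw [coeff_negZ, coeff_negZ, ← mul_assoc, ← mul_zpow, neg_one_mul, neg_neg, one_zpow, one_mul]

theorem negZ_zero : negZ 0 = 0 := by
  ext n
  simp

theorem negZ_add (s t : LaurentSeries ℂ) : (s + t).negZ = s.negZ + t.negZ := by
  ext n
  simp [mul_add]

theorem negZ_mul (s t : LaurentSeries ℂ) : (s * t).negZ = s.negZ * t.negZ := by
  ext n
  simp only [coeff_negZ, HahnSeries.coeff_mul_eq_finsum, mul_finsum]
  refine finsum_congr fun i => ?_
  rw [← sub_add_cancel n i, zpow_add₀ (by norm_num), add_sub_cancel_right]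
  ring

theorem negZ_single (j : ℤ) (r : ℂ) :
    negZ (HahnSeries.single j r) = HahnSeries.single j ((-1) ^ j * r) := by
  ext n
  rcases eq_or_ne n j with rfl | hn
  · simp
  · simp [HahnSeries.coeff_single_of_ne hn]

theorem negZ_C (c : ℂ) : negZ (HahnSeries.C c) = HahnSeries.C c := by
  rw [HahnSeries.C_apply, negZ_single, zpow_zero, one_mul]

def negZRingEquiv : LaurentSeries ℂ ≃+* LaurentSeries ℂ where
  toFun := negZ
  invFun := negZ
  left_inv := negZ_involutive
  right_inv := negZ_involutive
  map_mul' := negZ_mul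
  map_add' := negZ_add

end LaurentSeries

open LaurentSeries

section ResiduePairing

variable {n : Type*} [Fintype n]

def residuePairing (M : Matrix n n (LaurentSeries ℂ)) (f h : n → LaurentSeries ℂ) : ℂ :=
  (f ⬝ᵥ M *ᵥ fun i => (h i).negZ).coeff (-1)

theorem residuePairing_single_single [DecidableEq n] (M : Matrix n n (LaurentSeries ℂ))
    (c d : n) (j : ℤ) :
    residuePairing M (Pi.single c 1) (Pi.single d (HahnSeries.single j 1)) =
      (-1) ^ j * (M c d).coeff (-1 - j) := by
  have hneg : (fun i => negZ ((Pi.single d (HahnSeries.single j 1) : n → LaurentSeries ℂ) i)) =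
      Pi.single d (negZ (HahnSeries.single j 1)) :=
    funext (Pi.apply_single (fun _ => negZ) (fun _ => negZ_zero) d _)
  rw [residuePairing, hneg, negZ_single, Matrix.mulVec_single, single_dotProduct, one_mul]
  simp only [Pi.smul_apply, Matrix.col_apply, MulOpposite.smul_eq_mul_unop, MulOpposite.unop_op,
    HahnSeries.coeff_mul_single]
  ring

theorem residuePairing_injective :
    Function.Injective (residuePairing : Matrix n n (LaurentSeries ℂ) → _) := by
  classical
  intro M M' h
  ext c d k
  have hck := congrFun₂ h (Pi.single c 1) (Pi.single d (HahnSeries.single (-1 - k) 1))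
  rw [residuePairing_single_single, residuePairing_single_single, sub_sub_cancel] at hck
  exact mul_left_cancel₀ (zpow_ne_zero _ (by norm_num)) hck

theorem residuePairing_mulVec_mulVec (M S : Matrix n n (LaurentSeries ℂ))
    (f h : n → LaurentSeries ℂ) :
    residuePairing M (S *ᵥ f) (S *ᵥ h) = residuePairing (Sᵀ * M * S.map negZ) f h := by
  have hneg : (fun i => ((S *ᵥ h) i).negZ) = S.map negZ *ᵥ fun i => (h i).negZ :=
    funext (negZRingEquiv.toRingHom.map_mulVec S h)
  rw [residuePairing, residuePairing, hneg, ← Matrix.mulVec_mulVec, ← Matrix.mulVec_mulVec,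
    Matrix.dotProduct_mulVec f Sᵀ, Matrix.vecMul_transpose]

end ResiduePairing

theorem matAct_eq_mulVec (N : ℕ) (S : Matrix (Fin N) (Fin N) (LaurentSeries ℂ))
    (f : Fin N → LaurentSeries ℂ) : matAct N S f = S *ᵥ f := rfl

theorem OmegaForm_eq_residuePairing (N : ℕ) (G : Matrix (Fin N) (Fin N) ℂ)
    (f h : Fin N → LaurentSeries ℂ) :
    OmegaForm N G f h = residuePairing (G.map HahnSeries.C) f h := by
  have hfin (a b : Fin N) : Function.HasFiniteSupport fun i =>
      (f a).coeff i * (HahnSeries.C (G a b) * (h b).negZ).coeff (-1 - i) :=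
    HahnSeries.hasFiniteSupport_coeff_mul_coeff_sub _ _ _
  simp only [residuePairing, dotProduct, Matrix.mulVec, Matrix.map_apply, Finset.mul_sum,
    HahnSeries.coeff_sum, HahnSeries.coeff_mul_eq_finsum (f _)]
  rw [Finset.sum_congr rfl fun a _ => sum_finsum_comm _ _ fun b _ => hfin a b,
    sum_finsum_comm _ _ fun a _ => Function.HasFiniteSupport.sum (hfin a) _]
  refine finsum_congr fun i => ?_
  simp only [Finset.mul_sum, HahnSeries.C_mul_eq_smul, HahnSeries.coeff_smul, coeff_negZ,
    smul_eq_mul]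
  refine Finset.sum_congr rfl fun a _ => Finset.sum_congr rfl fun b _ => by ring

theorem map_map_C_negZ {m n : Type*} (A : Matrix m n ℂ) :
    (A.map HahnSeries.C).map negZ = A.map HahnSeries.C :=
  Matrix.ext fun _ _ => negZ_C _

theorem map_negZ_mul {n : Type*} [Fintype n] (A B : Matrix n n (LaurentSeries ℂ)) :
    (A * B).map negZ = A.map negZ * B.map negZ :=
  Matrix.map_mul (f := negZRingEquiv.toRingHom)

theorem map_negZ_map_negZ {m n : Type*} (A : Matrix m n (LaurentSeries ℂ)) :
    (A.map negZ).map negZ = A :=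
  Matrix.map_involutive negZ_involutive A

theorem map_adjT_negZ (N : ℕ) (G : Matrix (Fin N) (Fin N) ℂ)
    (S : Matrix (Fin N) (Fin N) (LaurentSeries ℂ)) :
    (adjT N G S).map negZ = G⁻¹.map HahnSeries.C * Sᵀ.map negZ * G.map HahnSeries.C := by
  rw [adjT, map_negZ_mul, map_negZ_mul, map_map_C_negZ, map_map_C_negZ]

theorem transpose_mul_mul_map_negZ_eq_iff (N : ℕ) (G : Matrix (Fin N) (Fin N) ℂ)
    (hG : IsUnit G.det) (S : Matrix (Fin N) (Fin N) (LaurentSeries ℂ)) :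
    Sᵀ * G.map HahnSeries.C * S.map negZ = G.map HahnSeries.C ↔
      (adjT N G S).map negZ * S = 1 := by
  let g := Matrix.GeneralLinearGroup.map (HahnSeries.C : ℂ →+* LaurentSeries ℂ)
    (Matrix.GeneralLinearGroup.mk'' G hG)
  have hg : (g : Matrix (Fin N) (Fin N) (LaurentSeries ℂ)) = G.map HahnSeries.C := rfl
  have hg_inv : (↑g⁻¹ : Matrix (Fin N) (Fin N) (LaurentSeries ℂ)) = G⁻¹.map HahnSeries.C := rfl
  calc Sᵀ * G.map HahnSeries.C * S.map negZ = G.map HahnSeries.C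
      ↔ Sᵀ.map negZ * G.map HahnSeries.C * S = G.map HahnSeries.C := by
        rw [← (Matrix.map_involutive negZ_involutive).injective.eq_iff, map_negZ_mul,
          map_negZ_mul, map_map_C_negZ, map_negZ_map_negZ]
    _ ↔ (adjT N G S).map negZ * S = 1 := by
        rw [map_adjT_negZ, ← hg, ← hg_inv]
        simp only [Matrix.mul_assoc]
        rw [Units.inv_mul_eq_one, eq_comm]

theorem loop_group_element_iff_general (N : ℕ)
    (G : Matrix (Fin N) (Fin N) ℂ) (hGinv : IsUnit G.det)
    (S : Matrix (Fin N) (Fin N) (LaurentSeries ℂ)) :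
    ((∀ f h : Fin N → LaurentSeries ℂ,
        OmegaForm N G (matAct N S f) (matAct N S h) = OmegaForm N G f h) ↔
      (adjT N G S).map LaurentSeries.negZ * S = 1) ∧
    ((adjT N G S).map LaurentSeries.negZ * S = 1 ↔
      S * (adjT N G S).map LaurentSeries.negZ = 1) := by
  refine ⟨?_, mul_eq_one_comm⟩
  simp only [matAct_eq_mulVec, OmegaForm_eq_residuePairing, residuePairing_mulVec_mulVec]
  rw [← transpose_mul_mul_map_negZ_eq_iff N G hGinv S]
  exact ⟨fun h => residuePairing_injective (funext₂ h), fun h f g => by rw [h]⟩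

/-- A matrix-valued Laurent series `S` preserves the residue symplectic form iff
`S*(−z)·S(z) = I`, equivalently iff `S(z)·S*(−z) = I`: the characterization of
loop group elements acting on Givental's symplectic space. -/
theorem loop_group_element_iff (N : ℕ) (hN : 1 ≤ N)
    (G : Matrix (Fin N) (Fin N) ℂ) (hGsymm : G.transpose = G) (hGinv : IsUnit G.det)
    (S : Matrix (Fin N) (Fin N) (LaurentSeries ℂ)) :
    ((∀ f h : Fin N → LaurentSeries ℂ,
        OmegaForm N G (matAct N S f) (matAct N S h) = OmegaForm N G f h) ↔
      (adjT N G S).map LaurentSeries.negZ * S = 1) ∧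
    ((adjT N G S).map LaurentSeries.negZ * S = 1 ↔
      S * (adjT N G S).map LaurentSeries.negZ = 1) :=
  loop_group_element_iff_general N G hGinv S

end
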